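/- arXiv:1503.03045 — 3 statements merged into one kernel-verified Lean document; each statement's English description precedes it below -/
import Mathlib

section
/- (Generalized BEST theorem) The number of open Eulerian tours from x_init to x_fin on a connected quasibalanced digraph equals T_{x_fin} · Π_x (d_out(x) − 1 + δ_{x,x_fin})!, where T_{x_fin} is the number of oriented spanning trees rooted at (pointing toward) x_fin. -/
/-!
The BEST bijection. A tour determines, at each vertex, the order in which it uses the arrows
leaving that vertex. Conversely, given such exit orders, let the walk from `x_init` always leave
by the next unused arrow. By quasibalance it can only get stuck at `x_fin`, and it has then used
every arrow provided the last exits of the vertices `x ≠ x_fin` form a spanning tree rooted at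
`x_fin`: if an arrow out of `x` is unused, so is the last exit of `x`, hence by balance some exit
of its head, and so on up to `x_fin`, all of whose incoming arrows have been used. In a tour the
times of the last departures increase along last exits, so these always form such a tree.
A tree `t` is the last-exit map of `∏_{x ≠ x_fin} φ (t x) x (d_out x - 1)! · d_out(x_fin)!`
exit orders, and forgetting the labels of parallel arrows divides the number of tours by
`∏ φ_{ab}!`.
-/

open scoped Classical

/-- The number of transitions `b → a` along the path `x`. -/
def flux {X : Type*} [DecidableEq X] {N : ℕ} (x : Fin (N + 1) → X) (a b : X) : ℕ :=
  (Finset.univ.filter (fun i : Fin N => x i.succ = a ∧ x i.castSucc = b)).card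

/-- The number of oriented spanning trees of the multidigraph `φ` rooted at (pointing
toward) `r`: a tree is a choice, for each vertex `x ≠ r`, of one outgoing arrow
(encoded by the parent map `t` weighted by the arrow multiplicity `φ (t x) x`) such
that every vertex reaches `r` by iterating `t` (no cycles). -/
noncomputable def treeCount {X : Type*} [Fintype X] [DecidableEq X]
    (φ : X → X → ℕ) (r : X) : ℕ :=
  ∑ t : X → X,
    if (t r = r ∧ ∀ x : X, ∃ n : ℕ, t^[n] x = r) then
      ∏ x ∈ Finset.univ.erase r, φ (t x) x
    else 0

namespace BEST

open Finset

variable {X : Type*}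

lemma exists_iterate_eq_of_lt {α : Type*} (t : α → α) (r : α) (μ : α → ℕ) (B : ℕ)
    (hB : ∀ x, μ x ≤ B) (ht : ∀ x, x ≠ r → μ x < μ (t x)) (x : α) : ∃ n, t^[n] x = r := by
  induction h : B - μ x using Nat.strong_induction_on generalizing x with
  | _ k ih =>
    by_cases hx : x = r
    · exact ⟨0, hx⟩
    · have hlt : B - μ (t x) < k := by have := ht x hx; have := hB (t x); omega
      obtain ⟨n, hn⟩ := ih _ hlt (t x) rfl
      exact ⟨n + 1, hn⟩

open Fin.NatCast

section Visits

variable [DecidableEq X] {N : ℕ} (p : Fin (N + 1) → X)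

/-- The cast of `j` to `Fin (N + 1)` wraps around, so this is meant for `n ≤ N + 1`. -/
def visitsBefore (n : ℕ) (x : X) : ℕ := #((range n).filter fun j : ℕ => p j = x)

lemma visitsBefore_succ (n : ℕ) (x : X) :
    visitsBefore p (n + 1) x = visitsBefore p n x + if p n = x then 1 else 0 := by
  rw [visitsBefore, visitsBefore, range_add_one, filter_insert]
  split_ifs
  · rw [card_insert_of_notMem (by simp)]
  · rfl

lemma visitsBefore_lt_visitsBefore {j n : ℕ} {x : X} (hj : p j = x) (hjn : j < n) :
    visitsBefore p j x < visitsBefore p n x := by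
  refine card_lt_card ((ssubset_iff_of_subset
    (filter_subset_filter _ (range_subset_range.2 hjn.le))).2 ⟨j, ?_, by simp⟩)
  simpa [hj] using hjn

lemma visitsBefore_eq_card (x : X) : visitsBefore p N x = #{i : Fin N | p i.castSucc = x} := by
  rw [visitsBefore, card_filter, card_filter, ← Fin.sum_univ_eq_sum_range]
  simp only [Fin.coe_eq_castSucc]

end Visits

section Arrows

variable [Fintype X] (φ : X → X → ℕ)

def outDeg (x : X) : ℕ := ∑ y, φ y x

def inDeg (x : X) : ℕ := ∑ y, φ x y

def numArrows : ℕ := ∑ a, ∑ b, φ a b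

/-- The arrows `x → y` are the pairs `⟨y, k⟩` with `k : Fin (φ y x)`. -/
abbrev OutArrow (x : X) : Type _ := Σ y : X, Fin (φ y x)

lemma card_outArrow (x : X) : Fintype.card (OutArrow φ x) = outDeg φ x := by
  simp [outDeg]

lemma sum_outDeg : ∑ x, outDeg φ x = numArrows φ := sum_comm

lemma card_arrow : Fintype.card (Σ x, OutArrow φ x) = numArrows φ := by
  rw [Fintype.card_sigma, ← sum_outDeg]
  exact sum_congr rfl fun x _ => card_outArrow φ x

def arrowsFromTo (b a : X) : {e : Σ x, OutArrow φ x // e.1 = b ∧ e.2.1 = a} ≃ Fin (φ a b) where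
  toFun
    | ⟨⟨_, _, k⟩, rfl, rfl⟩ => k
  invFun k := ⟨⟨b, a, k⟩, rfl, rfl⟩
  left_inv := by rintro ⟨⟨x, y, k⟩, rfl, rfl⟩; rfl
  right_inv _ := rfl

def IsConnected : Prop := ∀ a b, Relation.ReflTransGen (fun u v => 0 < φ u v + φ v u) a b

variable [DecidableEq X]

def IsQuasibalanced (x₀ x₁ : X) : Prop :=
  ∀ a, (inDeg φ a : ℤ) - outDeg φ a = (if a = x₁ then 1 else 0) - (if a = x₀ then 1 else 0)

lemma outDeg_pos_of_ne {x₀ x₁ x : X} (hconn : IsConnected φ) (hqb : IsQuasibalanced φ x₀ x₁)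
    (hx : x ≠ x₁) : 0 < outDeg φ x := by
  obtain hx₁ | ⟨y, hy, -⟩ := (hconn x x₁).cases_head
  · exact absurd hx₁ hx
  · have hin : φ x y ≤ inDeg φ x := single_le_sum (fun z _ => Nat.zero_le (φ x z)) (mem_univ y)
    have hout : φ y x ≤ outDeg φ x := single_le_sum (fun z _ => Nat.zero_le (φ z x)) (mem_univ y)
    have hq := hqb x
    rw [if_neg hx] at hq
    split_ifs at hq <;> omega

lemma card_departures {N : ℕ} {p : Fin (N + 1) → X} (hp : ∀ a b, flux p a b = φ a b) (x : X) :
    #{i : Fin N | p i.castSucc = x} = outDeg φ x := by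
  rw [card_eq_sum_card_fiberwise (f := fun i => p i.succ) (t := univ) fun _ _ => mem_univ _,
    outDeg]
  refine sum_congr rfl fun y _ => ?_
  rw [← hp y x, flux, filter_filter]
  simp only [and_comm]

/-- `ρ x` numbers the arrows leaving `x` in the order in which a tour uses them. -/
abbrev ExitOrder : Type _ := ∀ x : X, OutArrow φ x ≃ Fin (outDeg φ x)

def lastExitOf (x : X) (e : OutArrow φ x ≃ Fin (outDeg φ x)) : X :=
  if h : 0 < outDeg φ x then (e.symm ⟨outDeg φ x - 1, by omega⟩).1 else x

def lastExit (ρ : ExitOrder φ) (x₁ x : X) : X :=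
  if x = x₁ then x₁ else lastExitOf φ x (ρ x)

abbrev TreeExitOrder (x₁ : X) : Type _ :=
  {ρ : ExitOrder φ // ∀ x, ∃ n, (lastExit φ ρ x₁)^[n] x = x₁}

end Arrows

section Tours

variable [Fintype X] [DecidableEq X] {φ : X → X → ℕ} {N : ℕ}

abbrev Steps (p : Fin (N + 1) → X) (a b : X) : Type _ :=
  {i : Fin N // p i.succ = a ∧ p i.castSucc = b}

def stepsEquivOfArrows {p : Fin (N + 1) → X} (σ : Fin N ≃ Σ x, OutArrow φ x)
    (hσ : ∀ i, (σ i).1 = p i.castSucc ∧ (σ i).2.1 = p i.succ) (a b : X) :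
    Steps p a b ≃ Fin (φ a b) :=
  (σ.subtypeEquiv fun i => by rw [← (hσ i).1, ← (hσ i).2, and_comm]).trans (arrowsFromTo φ b a)

omit [Fintype X] in
lemma flux_eq_of_arrows {p : Fin (N + 1) → X} (σ : Fin N ≃ Σ x, OutArrow φ x)
    (hσ : ∀ i, (σ i).1 = p i.castSucc ∧ (σ i).2.1 = p i.succ) (a b : X) :
    flux p a b = φ a b := by
  rw [flux, ← Fintype.card_subtype, Fintype.card_congr (stepsEquivOfArrows σ hσ a b),
    Fintype.card_fin]

variable (φ) in
abbrev EulerPath (x₀ x₁ : X) : Type _ :=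
  {p : Fin (numArrows φ + 1) → X // p 0 = x₀ ∧ p (Fin.last _) = x₁ ∧ ∀ a b, flux p a b = φ a b}

variable (φ) in
/-- Open Eulerian tours with distinguishable arrows: a vertex path together with a labelling of
its steps `b → a` by the `φ a b` arrows `b → a`. -/
abbrev Tour (x₀ x₁ : X) : Type _ :=
  Σ p : EulerPath φ x₀ x₁, ∀ a b, Steps p.1 a b ≃ Fin (φ a b)

variable {x₀ x₁ : X}

def Tour.arrow (s : Tour φ x₀ x₁) (i : Fin (numArrows φ)) : Σ x, OutArrow φ x :=
  ⟨s.1.1 i.castSucc, s.1.1 i.succ, s.2 _ _ ⟨i, rfl, rfl⟩⟩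

lemma Tour.arrow_injective : Function.Injective (Tour.arrow (φ := φ) (x₀ := x₀) (x₁ := x₁)) := by
  rintro ⟨⟨p, hp₀, _⟩, ℓ⟩ ⟨⟨q, hq₀, _⟩, ℓ'⟩ h
  obtain rfl : p = q := funext fun i => by
    induction i using Fin.cases with
    | zero => rw [hp₀, hq₀]
    | succ i => exact congrArg (fun e => e.2.1) (congrFun h i)
  obtain rfl : ℓ = ℓ' := by
    funext a b
    ext ⟨i, rfl, rfl⟩
    have := congrFun h i
    simp only [Tour.arrow, Sigma.mk.injEq, heq_eq_eq, true_and] at this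
    rw [this]
  rfl

def Tour.ofArrows (p : Fin (numArrows φ + 1) → X) (h₀ : p 0 = x₀) (h₁ : p (Fin.last _) = x₁)
    (σ : Fin (numArrows φ) ≃ Σ x, OutArrow φ x)
    (hσ : ∀ i, (σ i).1 = p i.castSucc ∧ (σ i).2.1 = p i.succ) : Tour φ x₀ x₁ :=
  ⟨⟨p, h₀, h₁, flux_eq_of_arrows σ hσ⟩, stepsEquivOfArrows σ hσ⟩

lemma Tour.arrow_ofArrows (p : Fin (numArrows φ + 1) → X) (h₀ : p 0 = x₀)
    (h₁ : p (Fin.last _) = x₁) (σ : Fin (numArrows φ) ≃ Σ x, OutArrow φ x)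
    (hσ : ∀ i, (σ i).1 = p i.castSucc ∧ (σ i).2.1 = p i.succ) :
    (Tour.ofArrows p h₀ h₁ σ hσ).arrow = σ :=
  funext fun i => congrArg Subtype.val ((arrowsFromTo φ _ _).symm_apply_apply ⟨σ i, hσ i⟩)

end Tours

section Walk

variable [Fintype X] [DecidableEq X] {φ : X → X → ℕ} (ρ : ExitOrder φ)

def exitHead (x : X) (k : ℕ) : X :=
  if h : k < outDeg φ x then ((ρ x).symm ⟨k, h⟩).1 else x

def CanExit (φ : X → X → ℕ) (s : X × (X → ℕ)) : Prop := s.2 s.1 < outDeg φ s.1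

/-- A state is the current vertex together with the number of arrows used so far out of each
vertex; a step leaves by the first unused arrow, if any. -/
def step (s : X × (X → ℕ)) : X × (X → ℕ) :=
  if s.2 s.1 < outDeg φ s.1 then
    (exitHead ρ s.1 (s.2 s.1), Function.update s.2 s.1 (s.2 s.1 + 1))
  else s

def walk (x₀ : X) : ℕ → X × (X → ℕ)
  | 0 => (x₀, 0)
  | n + 1 => step ρ (walk x₀ n)

def usedInto (u : X → ℕ) (x : X) : ℕ :=
  ∑ y, #{k ∈ range (u y) | exitHead ρ y k = x}

variable {ρ} {s : X × (X → ℕ)}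

lemma step_of_canExit (h : CanExit φ s) :
    step ρ s = (exitHead ρ s.1 (s.2 s.1), Function.update s.2 s.1 (s.2 s.1 + 1)) :=
  if_pos h

lemma step_of_not_canExit (h : ¬ CanExit φ s) : step ρ s = s := if_neg h

lemma step_snd_le (hs : ∀ x, s.2 x ≤ outDeg φ x) (x : X) : (step ρ s).2 x ≤ outDeg φ x := by
  by_cases h : CanExit φ s
  · rw [step_of_canExit h]
    dsimp only
    rw [Function.update_apply]
    split_ifs with hx
    · subst hx; exact h
    · exact hs x
  · rw [step_of_not_canExit h]; exact hs x

lemma sum_step_of_canExit (h : CanExit φ s) : ∑ x, (step ρ s).2 x = ∑ x, s.2 x + 1 := by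
  rw [step_of_canExit h, sum_update_of_mem (mem_univ _),
    ← add_sum_erase _ _ (mem_univ s.1), sdiff_singleton_eq_erase]
  ring

lemma usedInto_update (u : X → ℕ) (v x : X) :
    usedInto ρ (Function.update u v (u v + 1)) x =
      usedInto ρ u x + if exitHead ρ v (u v) = x then 1 else 0 := by
  unfold usedInto
  rw [← add_sum_erase _ _ (mem_univ v),
    ← add_sum_erase _ (fun y => #{k ∈ range (u y) | exitHead ρ y k = x})
      (mem_univ v),
    sum_congr rfl fun y hy => by rw [Function.update_of_ne (ne_of_mem_erase hy)],
    Function.update_self, range_add_one, filter_insert]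
  split_ifs
  · rw [card_insert_of_notMem (by simp)]; ring
  · ring

lemma step_balance {x₀ : X} (hs : ∀ x, (s.2 x : ℤ) + (if x = s.1 then 1 else 0) =
      usedInto ρ s.2 x + (if x = x₀ then 1 else 0)) (x : X) :
    ((step ρ s).2 x : ℤ) + (if x = (step ρ s).1 then 1 else 0) =
      usedInto ρ (step ρ s).2 x + (if x = x₀ then 1 else 0) := by
  by_cases h : CanExit φ s
  · have := hs x
    rw [step_of_canExit h]
    dsimp only
    rw [usedInto_update, Function.update_apply]
    push_cast
    split_ifs at this ⊢ <;> grind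
  · rw [step_of_not_canExit h]; exact hs x

variable (ρ) (x₀ : X)

lemma used_le_outDeg (n : ℕ) (x : X) : (walk ρ x₀ n).2 x ≤ outDeg φ x := by
  induction n generalizing x with
  | zero => exact Nat.zero_le _
  | succ n ih => exact step_snd_le ih x

lemma sum_used_le (n : ℕ) : ∑ x, (walk ρ x₀ n).2 x ≤ n := by
  induction n with
  | zero => simp [walk]
  | succ n ih =>
    by_cases h : CanExit φ (walk ρ x₀ n)
    · rw [walk, sum_step_of_canExit h]; omega
    · rw [walk, step_of_not_canExit h]; omega

lemma walk_balance (n : ℕ) (x : X) :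
    ((walk ρ x₀ n).2 x : ℤ) + (if x = (walk ρ x₀ n).1 then 1 else 0) =
      usedInto ρ (walk ρ x₀ n).2 x + (if x = x₀ then 1 else 0) := by
  induction n generalizing x with
  | zero => simp [walk, usedInto]; rfl
  | succ n ih => exact step_balance ih x

lemma card_exitHead_eq (y x : X) : #{k ∈ range (outDeg φ y) | exitHead ρ y k = x} = φ x y := by
  rw [card_filter, ← Fin.sum_univ_eq_sum_range (fun k => if exitHead ρ y k = x then 1 else 0),
    ← card_filter, ← Fintype.card_subtype]
  have e : {k : Fin (outDeg φ y) // exitHead ρ y k = x} ≃ {e : OutArrow φ y // e.1 = x} :=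
    (ρ y).symm.subtypeEquiv fun k => by rw [exitHead, dif_pos k.2]
  rw [Fintype.card_congr (e.trans (Equiv.sigmaSubtype x)), Fintype.card_fin]

variable {ρ}

lemma card_filter_exitHead_le {y : X} {m : ℕ} (hm : m ≤ outDeg φ y) (x : X) :
    #{k ∈ range m | exitHead ρ y k = x} ≤ φ x y :=
  card_exitHead_eq ρ y x ▸ card_le_card (filter_subset_filter _ (range_subset_range.2 hm))

lemma usedInto_le_inDeg {u : X → ℕ} (hu : ∀ y, u y ≤ outDeg φ y) (x : X) :
    usedInto ρ u x ≤ inDeg φ x :=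
  sum_le_sum fun y _ => card_filter_exitHead_le (hu y) x

lemma lastExit_eq_exitHead {x₁ x : X} (hx : x ≠ x₁) (hd : 0 < outDeg φ x) :
    lastExit φ ρ x₁ x = exitHead ρ x (outDeg φ x - 1) := by
  rw [lastExit, if_neg hx, lastExitOf, dif_pos hd, exitHead, dif_pos (by omega)]

/-- The last exit from `x` is among its unused exits. -/
lemma usedInto_lastExit_lt {u : X → ℕ} (hu : ∀ y, u y ≤ outDeg φ y) {x₁ x : X} (hx : x ≠ x₁)
    (h : u x < outDeg φ x) :
    usedInto ρ u (lastExit φ ρ x₁ x) < inDeg φ (lastExit φ ρ x₁ x) := by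
  set y := lastExit φ ρ x₁ x
  have hy : exitHead ρ x (outDeg φ x - 1) = y := (lastExit_eq_exitHead hx (by omega)).symm
  have hlt : #{k ∈ range (u x) | exitHead ρ x k = y} < φ y x := by
    rw [← card_exitHead_eq ρ x y]
    refine card_lt_card ((ssubset_iff_of_subset ?_).2 ⟨outDeg φ x - 1, ?_, ?_⟩)
    · exact filter_subset_filter _ (range_subset_range.2 h.le)
    · simp only [mem_filter, mem_range]; exact ⟨by omega, hy⟩
    · simp only [mem_filter, mem_range]; omega
  exact sum_lt_sum (fun z _ => card_filter_exitHead_le (hu z) y) ⟨x, mem_univ x, hlt⟩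

section Quasibalanced

variable {x₀ x₁ : X}
  (hqb : IsQuasibalanced φ x₀ x₁)
include hqb

lemma walk_fst_eq_of_not_canExit {n : ℕ} (h : ¬ CanExit φ (walk ρ x₀ n)) :
    (walk ρ x₀ n).1 = x₁ := by
  unfold CanExit at h
  set v := (walk ρ x₀ n).1
  have hbal := walk_balance ρ x₀ n v
  have hin := usedInto_le_inDeg (ρ := ρ) (used_le_outDeg ρ x₀ n) v
  have hout := used_le_outDeg ρ x₀ n v
  have hq := hqb v
  rw [if_pos rfl] at hbal
  by_contra hv
  split_ifs at hbal hq <;> omega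

lemma used_lt_outDeg_of_usedInto_lt {n : ℕ} (hpos : (walk ρ x₀ n).1 = x₁) {y : X}
    (hy : usedInto ρ (walk ρ x₀ n).2 y < inDeg φ y) : (walk ρ x₀ n).2 y < outDeg φ y := by
  have hbal := walk_balance ρ x₀ n y
  have hq := hqb y
  rw [hpos] at hbal
  split_ifs at hbal hq <;> omega

variable (hρ : ∀ x, ∃ k, (lastExit φ ρ x₁)^[k] x = x₁)
include hρ

/-- The vertices with an unused exit are closed under `lastExit` but miss `x₁` when the walk
is stuck, so there are none. -/
lemma used_eq_outDeg_of_not_canExit {n : ℕ} (h : ¬ CanExit φ (walk ρ x₀ n)) (x : X) :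
    (walk ρ x₀ n).2 x = outDeg φ x := by
  have hpos := walk_fst_eq_of_not_canExit hqb h
  have hfin : ¬ (walk ρ x₀ n).2 x₁ < outDeg φ x₁ := hpos ▸ h
  have hmaps : Set.MapsTo (lastExit φ ρ x₁) {y | (walk ρ x₀ n).2 y < outDeg φ y}
      {y | (walk ρ x₀ n).2 y < outDeg φ y} := fun y hy =>
    used_lt_outDeg_of_usedInto_lt hqb hpos <| usedInto_lastExit_lt (used_le_outDeg ρ x₀ n)
      (fun hy₁ => hfin (hy₁ ▸ hy)) hy
  obtain ⟨k, hk⟩ := hρ x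
  by_contra hx
  exact hfin (hk ▸ hmaps.iterate k (lt_of_le_of_ne (used_le_outDeg ρ x₀ n x) hx))

lemma canExit_walk {n : ℕ} (hn : n < numArrows φ) : CanExit φ (walk ρ x₀ n) := by
  by_contra h
  have hsum := sum_used_le ρ x₀ n
  rw [sum_congr rfl fun x _ => used_eq_outDeg_of_not_canExit hqb hρ h x, sum_outDeg] at hsum
  omega

lemma sum_used_walk {n : ℕ} (hn : n ≤ numArrows φ) : ∑ x, (walk ρ x₀ n).2 x = n := by
  induction n with
  | zero => simp [walk]
  | succ n ih => rw [walk, sum_step_of_canExit (canExit_walk hqb hρ (by omega)), ih (by omega)]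

lemma used_walk_numArrows (x : X) : (walk ρ x₀ (numArrows φ)).2 x = outDeg φ x :=
  (sum_eq_sum_iff_of_le fun y _ => used_le_outDeg ρ x₀ _ y).1
    ((sum_used_walk hqb hρ le_rfl).trans (sum_outDeg φ).symm) x (mem_univ x)

lemma walk_numArrows_fst : (walk ρ x₀ (numArrows φ)).1 = x₁ := by
  refine walk_fst_eq_of_not_canExit hqb fun h => ?_
  rw [CanExit, used_walk_numArrows hqb hρ] at h
  exact lt_irrefl _ h

lemma used_walk_eq_card {n : ℕ} (hn : n ≤ numArrows φ) (x : X) :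
    (walk ρ x₀ n).2 x = #{j ∈ range n | (walk ρ x₀ j).1 = x} := by
  induction n with
  | zero => rfl
  | succ n ih =>
    rw [walk, step_of_canExit (canExit_walk hqb hρ (by omega)), range_add_one, filter_insert]
    dsimp only
    by_cases hx : (walk ρ x₀ n).1 = x
    · subst hx
      rw [if_pos rfl, card_insert_of_notMem (by simp), Function.update_self, ih (by omega)]
    · rw [if_neg hx, Function.update_of_ne (Ne.symm hx), ih (by omega)]

variable (ρ x₀) in
def walkArrow (i : Fin (numArrows φ)) : Σ x, OutArrow φ x :=
  ⟨(walk ρ x₀ i).1, (ρ _).symm ⟨_, canExit_walk hqb hρ i.2⟩⟩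

variable (ρ x₀) in
def walkPath (i : Fin (numArrows φ + 1)) : X := (walk ρ x₀ i).1

lemma walkArrow_fst (i : Fin (numArrows φ)) :
    (walkArrow ρ x₀ hqb hρ i).1 = walkPath ρ x₀ i.castSucc := rfl

lemma walkArrow_snd_fst (i : Fin (numArrows φ)) :
    (walkArrow ρ x₀ hqb hρ i).2.1 = walkPath ρ x₀ i.succ := by
  have h : (walk ρ x₀ i).2 (walk ρ x₀ i).1 < outDeg φ _ := canExit_walk hqb hρ i.2
  change _ = (step ρ (walk ρ x₀ i)).1
  rw [step_of_canExit h, exitHead, dif_pos h]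
  rfl

lemma exitOrder_walkArrow (i : Fin (numArrows φ)) :
    (ρ (walkArrow ρ x₀ hqb hρ i).1 (walkArrow ρ x₀ hqb hρ i).2 : ℕ) =
      (walk ρ x₀ i).2 (walk ρ x₀ i).1 :=
  congrArg Fin.val (Equiv.apply_symm_apply _ _)

/-- The `k`-th exit from `x` is taken at the `k`-th visit of `x`. -/
lemma walkArrow_bijective : Function.Bijective (walkArrow ρ x₀ hqb hρ) := by
  refine (Fintype.bijective_iff_injective_and_card _).2
    ⟨Function.Injective.of_lt_imp_ne fun i j hij h => ?_, by rw [Fintype.card_fin, card_arrow]⟩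
  have hfst : (walk ρ x₀ i).1 = (walk ρ x₀ j).1 := congrArg Sigma.fst h
  have hrank := exitOrder_walkArrow hqb hρ i
  rw [h, exitOrder_walkArrow hqb hρ j, ← hfst, used_walk_eq_card hqb hρ i.2.le,
    used_walk_eq_card hqb hρ j.2.le] at hrank
  have hsub : {k ∈ range i | (walk ρ x₀ k).1 = (walk ρ x₀ i).1} ⊂
      {k ∈ range j | (walk ρ x₀ k).1 = (walk ρ x₀ i).1} := by
    refine (ssubset_iff_of_subset (filter_subset_filter _ (range_subset_range.2 hij.le))).2
      ⟨i, ?_, by simp⟩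
    simpa using hij
  exact (card_lt_card hsub).ne hrank.symm

end Quasibalanced

end Walk

section TourOfOrder

variable [Fintype X] [DecidableEq X] {φ : X → X → ℕ} {x₀ x₁ : X}
  (hqb : IsQuasibalanced φ x₀ x₁)

noncomputable def tourOfOrder (r : TreeExitOrder φ x₁) : Tour φ x₀ x₁ :=
  Tour.ofArrows (walkPath r.1 x₀) rfl (walk_numArrows_fst hqb r.2)
    (Equiv.ofBijective _ (walkArrow_bijective hqb r.2))
    fun i => ⟨walkArrow_fst hqb r.2 i, walkArrow_snd_fst hqb r.2 i⟩

lemma arrow_tourOfOrder (r : TreeExitOrder φ x₁) :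
    (tourOfOrder hqb r).arrow = walkArrow r.1 x₀ hqb r.2 :=
  Tour.arrow_ofArrows _ _ _ _ _

lemma tourOfOrder_injective : Function.Injective (tourOfOrder hqb) := by
  intro r r' h
  have harr : walkArrow r.1 x₀ hqb r.2 = walkArrow r'.1 x₀ hqb r'.2 := by
    rw [← arrow_tourOfOrder, ← arrow_tourOfOrder, h]
  have hpos : ∀ j < numArrows φ, (walk r.1 x₀ j).1 = (walk r'.1 x₀ j).1 := fun j hj =>
    congrArg Sigma.fst (congrFun harr ⟨j, hj⟩)
  refine Subtype.ext (funext fun x => Equiv.ext fun e => Fin.ext ?_)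
  obtain ⟨i, hi⟩ := (walkArrow_bijective hqb r.2).2 ⟨x, e⟩
  have h₁ := exitOrder_walkArrow hqb r.2 i
  have h₂ := exitOrder_walkArrow hqb r'.2 i
  rw [hi] at h₁
  rw [← congrFun harr i, hi] at h₂
  rw [h₁, h₂, used_walk_eq_card hqb r.2 i.2.le, used_walk_eq_card hqb r'.2 i.2.le, hpos i i.2]
  exact congrArg card (filter_congr fun j hj => by rw [hpos j (by simp at hj; omega)])

end TourOfOrder

section OrderOfTour

variable [Fintype X] [DecidableEq X] {φ : X → X → ℕ} {x₀ x₁ : X} (s : Tour φ x₀ x₁)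

namespace Tour

lemma arrow_leftInverse :
    Function.LeftInverse (fun e : Σ x, OutArrow φ x => ((s.2 e.2.1 e.1).symm e.2.2).1) s.arrow :=
  fun i => congrArg Subtype.val ((s.2 _ _).symm_apply_apply ⟨i, rfl, rfl⟩)

lemma visitsBefore_lt_outDeg {i : ℕ} (hi : i < numArrows φ) (x : X) (hx : s.1.1 i = x) :
    visitsBefore s.1.1 i x < outDeg φ x := by
  rw [← card_departures φ s.1.2.2.2, ← visitsBefore_eq_card]
  exact visitsBefore_lt_visitsBefore _ hx hi

def exitArrow (x : X) (i : {i : Fin (numArrows φ) // s.1.1 i.castSucc = x}) : OutArrow φ x :=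
  ⟨s.1.1 i.1.succ, s.2 _ x ⟨i.1, rfl, i.2⟩⟩

def exitRank (x : X) (i : {i : Fin (numArrows φ) // s.1.1 i.castSucc = x}) :
    Fin (outDeg φ x) :=
  ⟨visitsBefore s.1.1 i.1 x, s.visitsBefore_lt_outDeg i.1.2 x (by rw [Fin.coe_eq_castSucc, i.2])⟩

lemma sigma_exitArrow {i : Fin (numArrows φ)} {x : X} (hi : s.1.1 i.castSucc = x) :
    (⟨x, s.exitArrow x ⟨i, hi⟩⟩ : Σ x, OutArrow φ x) = s.arrow i := by
  subst hi; rfl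

lemma exitArrow_bijective (x : X) : Function.Bijective (s.exitArrow x) := by
  refine (Fintype.bijective_iff_injective_and_card _).2 ⟨fun i j h => Subtype.ext ?_, ?_⟩
  · apply s.arrow_leftInverse.injective
    rw [← s.sigma_exitArrow i.2, ← s.sigma_exitArrow j.2, h]
  · rw [Fintype.card_subtype, card_departures φ s.1.2.2.2, card_outArrow]

lemma exitRank_bijective (x : X) : Function.Bijective (s.exitRank x) := by
  refine (Fintype.bijective_iff_injective_and_card _).2
    ⟨Function.Injective.of_lt_imp_ne fun i j hij h => ?_, ?_⟩
  · refine (visitsBefore_lt_visitsBefore s.1.1 ?_ hij).ne (congrArg Fin.val h)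
    rw [Fin.coe_eq_castSucc, i.2]
  · rw [Fintype.card_subtype, card_departures φ s.1.2.2.2, Fintype.card_fin]

/-- The exit order of a tour: the arrows leaving `x` ranked by the time they are used. -/
noncomputable def exitOrder : ExitOrder φ := fun x =>
  (Equiv.ofBijective _ (s.exitArrow_bijective x)).symm.trans
    (Equiv.ofBijective _ (s.exitRank_bijective x))

lemma exitOrder_symm_eq_arrow {i : Fin (numArrows φ)} {x : X} (hi : s.1.1 i.castSucc = x)
    (k : Fin (outDeg φ x)) (hk : (k : ℕ) = visitsBefore s.1.1 i x) :
    (⟨x, (s.exitOrder x).symm k⟩ : Σ x, OutArrow φ x) = s.arrow i := by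
  obtain rfl : k = s.exitRank x ⟨i, hi⟩ := Fin.ext hk
  rw [exitOrder, Equiv.symm_trans_apply, Equiv.symm_symm, Equiv.ofBijective_symm_apply_apply]
  exact s.sigma_exitArrow hi

lemma lastExit_exitOrder {x : X} (hx : x ≠ x₁) {i : Fin (numArrows φ)}
    (hi : s.1.1 i.castSucc = x) (hlast : visitsBefore s.1.1 i x = outDeg φ x - 1) :
    lastExit φ s.exitOrder x₁ x = s.1.1 i.succ := by
  have hd : 0 < outDeg φ x := by
    have := s.visitsBefore_lt_outDeg i.2 x (by rw [Fin.coe_eq_castSucc, hi]); omega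
  rw [lastExit, if_neg hx, lastExitOf, dif_pos hd]
  exact congrArg (fun e => e.2.1) (s.exitOrder_symm_eq_arrow hi ⟨_, by omega⟩ hlast.symm)

lemma le_of_lastDeparture {i : Fin (numArrows φ)} {x : X} (hi : s.1.1 i.castSucc = x)
    (hlast : visitsBefore s.1.1 i x = outDeg φ x - 1) {j : ℕ} (hj : j < numArrows φ)
    (hjx : s.1.1 j = x) : j ≤ i := by
  by_contra! hij
  have h₁ := visitsBefore_lt_visitsBefore s.1.1 (by rw [Fin.coe_eq_castSucc, hi]) hij
  have h₂ := s.visitsBefore_lt_outDeg hj x hjx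
  omega

/-- Following last exits, the time of the last departure increases until `x₁` is reached. -/
lemma exitOrder_isTree (hconn : IsConnected φ) (hqb : IsQuasibalanced φ x₀ x₁) :
    ∀ x, ∃ n, (lastExit φ s.exitOrder x₁)^[n] x = x₁ := by
  have hL (x : X) (hx : x ≠ x₁) : ∃ i : Fin (numArrows φ),
      s.1.1 i.castSucc = x ∧ visitsBefore s.1.1 i x = outDeg φ x - 1 := by
    have := outDeg_pos_of_ne φ hconn hqb hx
    obtain ⟨⟨i, hi⟩, h⟩ := (s.exitRank_bijective x).2 ⟨outDeg φ x - 1, by omega⟩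
    exact ⟨i, hi, congrArg Fin.val h⟩
  choose L hLx hLrank using hL
  refine exists_iterate_eq_of_lt _ x₁ (fun x => if h : x = x₁ then numArrows φ else L x h)
    (numArrows φ) (fun x => by split_ifs <;> omega) fun x hx => ?_
  rw [dif_neg hx, s.lastExit_exitOrder hx (hLx x hx) (hLrank x hx)]
  split_ifs with hy
  · exact (L x hx).2
  have hnext : (L x hx : ℕ) + 1 < numArrows φ := by
    by_contra! h
    exact hy ((congrArg s.1.1 (Fin.ext (by simp; omega))).trans s.1.2.2.1)
  refine Nat.lt_of_succ_le (s.le_of_lastDeparture (hLx _ hy) (hLrank _ hy) hnext ?_)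
  rw [Nat.cast_succ, Fin.coe_eq_castSucc, Fin.coeSucc_eq_succ]

lemma walk_exitOrder {n : ℕ} (hn : n ≤ numArrows φ) :
    (walk s.exitOrder x₀ n).1 = s.1.1 n ∧
      ∀ x, (walk s.exitOrder x₀ n).2 x = visitsBefore s.1.1 n x := by
  induction n with
  | zero => exact ⟨s.1.2.1.symm, fun _ => rfl⟩
  | succ n ih =>
    obtain ⟨hpos, hused⟩ := ih (by omega)
    set i : Fin (numArrows φ) := ⟨n, by omega⟩
    have hi : s.1.1 i.castSucc = (walk s.exitOrder x₀ n).1 := by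
      rw [hpos, ← Fin.coe_eq_castSucc]
    have hk : (walk s.exitOrder x₀ n).2 (walk s.exitOrder x₀ n).1 <
        outDeg φ (walk s.exitOrder x₀ n).1 := by
      rw [hused]; exact s.visitsBefore_lt_outDeg i.2 _ hpos.symm
    rw [walk, step_of_canExit hk]
    refine ⟨?_, fun x => ?_⟩
    · rw [exitHead, dif_pos hk, Nat.cast_succ, (Fin.coe_eq_castSucc (a := i) :),
        Fin.coeSucc_eq_succ]
      exact congrArg (fun e => e.2.1) (s.exitOrder_symm_eq_arrow hi ⟨_, hk⟩ (hused _))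
    · dsimp only
      rw [visitsBefore_succ, ← hused x, ← hpos]
      rcases eq_or_ne x (walk s.exitOrder x₀ n).1 with rfl | hx
      · rw [Function.update_self, if_pos rfl]
      · rw [Function.update_of_ne hx, if_neg hx.symm, add_zero]

lemma walkArrow_exitOrder (hqb : IsQuasibalanced φ x₀ x₁)
    (hρ : ∀ x, ∃ n, (lastExit φ s.exitOrder x₁)^[n] x = x₁) (i : Fin (numArrows φ)) :
    walkArrow s.exitOrder x₀ hqb hρ i = s.arrow i := by
  obtain ⟨hpos, hused⟩ := s.walk_exitOrder (x₀ := x₀) i.2.le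
  exact s.exitOrder_symm_eq_arrow (by rw [hpos, Fin.coe_eq_castSucc]) _ (hused _)

end Tour

lemma tourOfOrder_surjective (hconn : IsConnected φ) (hqb : IsQuasibalanced φ x₀ x₁) :
    Function.Surjective (tourOfOrder hqb) := fun s =>
  ⟨⟨s.exitOrder, s.exitOrder_isTree hconn hqb⟩, Tour.arrow_injective <|
    (arrow_tourOfOrder hqb _).trans (funext (s.walkArrow_exitOrder hqb _))⟩

end OrderOfTour

section Counting

lemma card_equiv_apply_eq {α : Type*} [Fintype α] [DecidableEq α] {m : ℕ}
    (h : Fintype.card α = m) (a : α) (i : Fin m) :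
    Nat.card {e : α ≃ Fin m // e a = i} = (m - 1).factorial := by
  have e₁ : {e : α ≃ Fin m // e a = i} ≃ {e : Option {b // b ≠ a} ≃ Fin m // e none = i} :=
    Equiv.subtypeEquiv ((Equiv.optionSubtypeNe a).equivCongr (Equiv.refl _)).symm fun e => by
      simp [Equiv.equivCongr]
  have hα : Fintype.card {b // b ≠ a} = m - 1 := by simp [Fintype.card_subtype_compl, h]
  have hm : Fintype.card {j : Fin m // j ≠ i} = m - 1 := by simp [Fintype.card_subtype_compl]
  rw [Nat.card_congr (e₁.trans (Equiv.optionSubtype i)), Nat.card_eq_fintype_card,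
    Fintype.card_equiv (Fintype.equivOfCardEq (hα.trans hm.symm)), hα]

lemma card_equiv_symm_apply_mem {α : Type*} [Fintype α] [DecidableEq α] {m : ℕ}
    (h : Fintype.card α = m) (P : α → Prop) (i : Fin m) :
    Nat.card {e : α ≃ Fin m // P (e.symm i)} = Nat.card {a // P a} * (m - 1).factorial := by
  rw [← Nat.card_congr (Equiv.sigmaSubtypeFiberEquivSubtype (fun e : α ≃ Fin m => e.symm i)
    fun _ => Iff.rfl), Nat.card_sigma]
  simp_rw [Nat.card_congr (Equiv.subtypeEquivRight fun e : α ≃ Fin m =>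
    (Equiv.symm_apply_eq e).trans eq_comm), card_equiv_apply_eq h]
  rw [sum_const, card_univ, smul_eq_mul, Nat.card_eq_fintype_card]

variable [Fintype X] [DecidableEq X] (φ : X → X → ℕ) {x₁ : X}

lemma card_lastExitOf_eq {x y : X} (hy : y ≠ x) :
    Nat.card {e : OutArrow φ x ≃ Fin (outDeg φ x) // lastExitOf φ x e = y} =
      φ y x * (outDeg φ x - 1).factorial := by
  by_cases hd : 0 < outDeg φ x
  · simp only [lastExitOf, dif_pos hd]
    rw [card_equiv_symm_apply_mem (card_outArrow φ x) (fun o : OutArrow φ x => o.1 = y),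
      Nat.card_congr (Equiv.sigmaSubtype y), Nat.card_eq_fintype_card, Fintype.card_fin]
  · have hφ : φ y x = 0 := by
      have := single_le_sum (fun z _ => Nat.zero_le (φ z x)) (mem_univ y)
      rw [outDeg] at hd; omega
    have : IsEmpty {e : OutArrow φ x ≃ Fin (outDeg φ x) // lastExitOf φ x e = y} :=
      ⟨fun e => hy (by rw [← e.2, lastExitOf, dif_neg hd])⟩
    rw [Nat.card_of_isEmpty, hφ, zero_mul]

lemma card_lastExit_fiber {t : X → X} (ht : t x₁ = x₁) (hfix : ∀ x, x ≠ x₁ → t x ≠ x) (x : X) :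
    Nat.card {e : OutArrow φ x ≃ Fin (outDeg φ x) //
        (if x = x₁ then x₁ else lastExitOf φ x e) = t x} =
      (if x = x₁ then 1 else φ (t x) x) *
        (outDeg φ x - 1 + if x = x₁ then 1 else 0).factorial := by
  split_ifs with hx
  · subst hx
    rw [Nat.card_congr (Equiv.subtypeUnivEquiv fun _ => ht.symm), Nat.card_eq_fintype_card,
      Fintype.card_equiv (Fintype.equivFinOfCardEq (card_outArrow φ x)), card_outArrow, one_mul]
    rcases Nat.eq_zero_or_pos (outDeg φ x) with h | h
    · rw [h]; rfl
    · rw [Nat.sub_add_cancel h]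
  · rw [card_lastExitOf_eq φ (hfix x hx), add_zero]

lemma card_lastExit_eq {t : X → X} (ht : t x₁ = x₁) (hfix : ∀ x, x ≠ x₁ → t x ≠ x) :
    Nat.card {ρ : ExitOrder φ // lastExit φ ρ x₁ = t} =
      (∏ x ∈ univ.erase x₁, φ (t x) x) *
        ∏ x, (outDeg φ x - 1 + if x = x₁ then 1 else 0).factorial := by
  rw [Nat.card_congr ((Equiv.subtypeEquivRight fun ρ : ExitOrder φ =>
      funext_iff (f := lastExit φ ρ x₁) (g := t)).trans (Equiv.subtypePiEquivPi
        (p := fun x e => (if x = x₁ then x₁ else lastExitOf φ x e) = t x))), Nat.card_pi]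
  simp_rw [card_lastExit_fiber φ ht hfix]
  rw [prod_mul_distrib, ← prod_erase_mul _ _ (mem_univ x₁), if_pos rfl, mul_one]
  congr 1
  exact prod_congr rfl fun x hx => if_neg (ne_of_mem_erase hx)

lemma card_treeExitOrder :
    Nat.card (TreeExitOrder φ x₁) =
      treeCount φ x₁ * ∏ x, (outDeg φ x - 1 + if x = x₁ then 1 else 0).factorial := by
  rw [← Nat.card_congr (Equiv.sigmaFiberEquiv fun r : TreeExitOrder φ x₁ => lastExit φ r.1 x₁),
    Nat.card_sigma, treeCount, sum_mul]
  refine sum_congr rfl fun t _ => ?_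
  split_ifs with ht
  · have hfix (x : X) (hx : x ≠ x₁) : t x ≠ x := fun htx => by
      obtain ⟨n, hn⟩ := ht.2 x
      exact hx (Function.iterate_fixed htx n ▸ hn)
    rw [← card_lastExit_eq φ ht.1 hfix]
    exact Nat.card_congr ((Equiv.subtypeSubtypeEquivSubtypeInter
      (fun ρ : ExitOrder φ => ∀ x, ∃ n, (lastExit φ ρ x₁)^[n] x = x₁)
      (fun ρ => lastExit φ ρ x₁ = t)).trans
      (Equiv.subtypeEquivRight fun ρ => and_iff_right_of_imp fun h => h ▸ ht.2))
  · have : IsEmpty {r : TreeExitOrder φ x₁ // lastExit φ r.1 x₁ = t} :=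
      ⟨fun r => ht ⟨r.2 ▸ if_pos rfl, r.2 ▸ r.1.2⟩⟩
    rw [Nat.card_of_isEmpty, zero_mul]

lemma card_tour (x₀ x₁ : X) :
    Nat.card (Tour φ x₀ x₁) =
      Nat.card (EulerPath φ x₀ x₁) * ∏ a, ∏ b, (φ a b).factorial := by
  have hlabels (p : EulerPath φ x₀ x₁) :
      Nat.card (∀ a b, Steps p.1 a b ≃ Fin (φ a b)) = ∏ a, ∏ b, (φ a b).factorial := by
    simp_rw [Nat.card_pi]
    refine prod_congr rfl fun a _ => prod_congr rfl fun b _ => ?_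
    have hcard : Fintype.card (Steps p.1 a b) = φ a b := by
      rw [Fintype.card_subtype]; exact p.2.2.2 a b
    rw [Nat.card_eq_fintype_card, Fintype.card_equiv (Fintype.equivFinOfCardEq hcard), hcard]
  rw [Nat.card_sigma, sum_congr rfl fun p _ => hlabels p, sum_const, card_univ, smul_eq_mul,
    Nat.card_eq_fintype_card]

end Counting

end BEST

theorem best_theorem_quasibalanced_general {X : Type*} [Fintype X] [DecidableEq X]
    (φ : X → X → ℕ) (xinit xfin : X)
    (hconn : ∀ a b : X, Relation.ReflTransGen (fun u v => 0 < φ u v + φ v u) a b)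
    (hqb : ∀ a : X, (∑ y, (φ a y : ℤ)) - ∑ y, (φ y a : ℤ) =
      (if a = xfin then 1 else 0) - (if a = xinit then 1 else 0)) :
    Nat.card {p : Fin ((∑ a, ∑ b, φ a b) + 1) → X //
        p 0 = xinit ∧ p (Fin.last _) = xfin ∧ ∀ a b, flux p a b = φ a b} *
      ∏ a, ∏ b, (φ a b).factorial =
    treeCount φ xfin *
      ∏ x, ((∑ y, φ y x) - 1 + if x = xfin then 1 else 0).factorial := by
  have hqb' : BEST.IsQuasibalanced φ xinit xfin := fun a => by
    rw [BEST.inDeg, BEST.outDeg]; push_cast; exact hqb a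
  calc _ = Nat.card (BEST.Tour φ xinit xfin) := (BEST.card_tour φ xinit xfin).symm
    _ = Nat.card (BEST.TreeExitOrder φ xfin) := (Nat.card_eq_of_bijective _
        ⟨BEST.tourOfOrder_injective hqb', BEST.tourOfOrder_surjective hconn hqb'⟩).symm
    _ = _ := BEST.card_treeExitOrder φ

/-- generalized BEST theorem: the number of open Eulerian tours
(with distinguishable arrows) from `xinit` to `xfin` on a connected quasibalanced
digraph, i.e. the number of vertex paths traversing each arrow class `b → a` exactly
`φ a b` times multiplied by the permutations `∏ (φ a b)!` of parallel arrows, equals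
`T_{xfin} · ∏_x (d_out(x) - 1 + δ_{x,xfin})!`. -/
theorem best_theorem_quasibalanced {X : Type*} [Fintype X] [DecidableEq X]
    (φ : X → X → ℕ) (xinit xfin : X) (hne : xinit ≠ xfin)
    (hconn : ∀ a b : X, Relation.ReflTransGen (fun u v => 0 < φ u v + φ v u) a b)
    (hqb : ∀ a : X, (∑ y, (φ a y : ℤ)) - ∑ y, (φ y a : ℤ) =
      (if a = xfin then 1 else 0) - (if a = xinit then 1 else 0)) :
    Nat.card {p : Fin ((∑ a, ∑ b, φ a b) + 1) → X //
        p 0 = xinit ∧ p (Fin.last _) = xfin ∧ ∀ a b, flux p a b = φ a b} *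
      ∏ a, ∏ b, (φ a b).factorial =
    treeCount φ xfin *
      ∏ x, ((∑ y, φ y x) - 1 + if x = xfin then 1 else 0).factorial :=
  best_theorem_quasibalanced_general φ xinit xfin hconn hqb
end

section
/- On a connected balanced digraph, the last-exit arrows of a closed Eulerian tour form an oriented spanning tree rooted at the starting vertex: if for each vertex x other than the start one records the last arrow of the tour exiting x, this set of arrows contains no directed cycle and connects every vertex to the start. -/
/-!
Every vertex `x ≠ x₀` touches an arrow, hence is visited by the tour, and since the tour ends at
`x₀` it also leaves `x`; so the last exit `e(x)` exists. If `e(x)` is the step `i`, its head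
`y = p (i + 1)` is left again at step `i + 1` unless `y = x₀`, so the last exit of `y` comes
strictly later than that of `x`. Following last-exit arrows therefore makes the last-exit time
increase until `x₀` is reached, which excludes cycles.
-/

theorem Function.exists_iterate_eq_of_rank_lt {X : Type*} {f : X → X} {x₀ : X} (r : X → ℕ)
    (hr : ∀ x, x ≠ x₀ → f x ≠ x₀ → r (f x) < r x) (x : X) : ∃ n, f^[n] x = x₀ := by
  induction hx : r x using Nat.strong_induction_on generalizing x with
  | _ k ih =>
    by_cases hx₀ : x = x₀
    · exact ⟨0, hx₀⟩
    by_cases hfx : f x = x₀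
    · exact ⟨1, hfx⟩
    obtain ⟨n, hn⟩ := ih _ (hx ▸ hr x hx₀ hfx) (f x) rfl
    exact ⟨n + 1, by rwa [Function.iterate_succ_apply]⟩

section Path

variable {X : Type*} {M : ℕ} {p : Fin (M + 1) → X}

theorem flux_pos_iff [DecidableEq X] {a b : X} :
    0 < flux p a b ↔ ∃ i : Fin M, p i.succ = a ∧ p i.castSucc = b := by
  simp [flux, Finset.card_pos, Finset.filter_nonempty_iff]

theorem mem_range_of_flux_add_flux_pos [DecidableEq X] {a b : X}
    (h : 0 < flux p a b + flux p b a) : b ∈ Set.range p := by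
  rcases Nat.eq_zero_or_pos (flux p a b) with h₀ | hpos
  · obtain ⟨i, hi, -⟩ := flux_pos_iff.mp (by omega : 0 < flux p b a)
    exact ⟨_, hi⟩
  · obtain ⟨i, -, hi⟩ := flux_pos_iff.mp hpos
    exact ⟨_, hi⟩

theorem exists_lastExit {x : X} (hx : p (Fin.last M) ≠ x) (hmem : x ∈ Set.range p) :
    ∃ i : Fin M, p i.castSucc = x ∧ ∀ j : Fin M, p j.castSucc = x → j ≤ i := by
  classical
  obtain ⟨k, rfl⟩ := hmem
  obtain ⟨i, rfl⟩ := Fin.exists_castSucc_eq.mpr (fun hk : k = Fin.last M => hx (hk ▸ rfl))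
  have hne : (Finset.univ.filter fun j : Fin M => p j.castSucc = p i.castSucc).Nonempty :=
    ⟨i, by simp⟩
  refine ⟨_, (Finset.mem_filter.mp (Finset.max'_mem _ hne)).2, fun j hj => ?_⟩
  exact Finset.le_max' _ j (by simp [hj])

theorem lt_of_forall_exit_le {i j : Fin M} (hne : p i.succ ≠ p (Fin.last M))
    (hmax : ∀ k : Fin M, p k.castSucc = p i.succ → k ≤ j) : i < j := by
  have hlt : i.val + 1 < M := by
    refine lt_of_le_of_ne i.isLt fun h => hne (congrArg p (Fin.ext ?_))
    simpa using h
  have := hmax ⟨i.val + 1, hlt⟩ (congrArg p (Fin.ext rfl))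
  rw [Fin.le_def] at this
  exact Fin.lt_def.mpr (by simpa using this)

end Path

theorem lastExit_spanning_tree_general {X : Type*} [DecidableEq X]
    (φ : X → X → ℕ) (x₀ : X) {M : ℕ}
    (hconn : ∀ a b : X, Relation.ReflTransGen (fun u v => 0 < φ u v + φ v u) a b)
    (p : Fin (M + 1) → X)
    (hend : p (Fin.last M) = x₀)
    (htour : ∀ a b, flux p a b = φ a b) :
    ∃ f : X → X, f x₀ = x₀ ∧
      (∀ x, x ≠ x₀ → ∃ i : Fin M, p i.castSucc = x ∧ p i.succ = f x ∧
        ∀ j : Fin M, p j.castSucc = x → j ≤ i) ∧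
      ∀ x : X, ∃ n : ℕ, f^[n] x = x₀ := by
  have hvisit (x : X) (hx : x ≠ x₀) : x ∈ Set.range p := by
    obtain ⟨v, hv, -⟩ := ((hconn x x₀).cases_head).resolve_left hx
    exact mem_range_of_flux_add_flux_pos (a := v) (by rwa [htour, htour, add_comm])
  choose last hlast_exit hlast_max using
    fun x (hx : x ≠ x₀) => exists_lastExit (hend ▸ hx.symm) (hvisit x hx)
  let f x := if hx : x = x₀ then x₀ else p (last x hx).succ
  have hf (x : X) (hx : x ≠ x₀) : f x = p (last x hx).succ := dif_neg hx
  refine ⟨f, dif_pos rfl, fun x hx => ⟨last x hx, hlast_exit x hx, (hf x hx).symm, hlast_max x hx⟩, ?_⟩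
  refine Function.exists_iterate_eq_of_rank_lt
    (fun x => if hx : x = x₀ then 0 else M - last x hx) fun x hx hfx => ?_
  have hlt : last x hx < last (f x) hfx :=
    lt_of_forall_exit_le (hf x hx ▸ hend ▸ hfx) (hf x hx ▸ hlast_max (f x) hfx)
  simp only [dif_neg hx, dif_neg hfx]
  have := (last (f x) hfx).isLt
  omega

/-- on a connected balanced digraph, the last-exit arrows of a closed
Eulerian tour form an oriented spanning tree rooted at the starting vertex: recording,
for each `x ≠ x₀`, the endpoint `f x` of the last arrow of the tour exiting `x`, the
resulting arrows contain no directed cycle and connect every vertex to `x₀`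
(i.e. iterating `f` from any vertex reaches `x₀`). -/
theorem lastExit_spanning_tree {X : Type*} [Fintype X] [DecidableEq X]
    (φ : X → X → ℕ) (x₀ : X) {M : ℕ}
    (hconn : ∀ a b : X, Relation.ReflTransGen (fun u v => 0 < φ u v + φ v u) a b)
    (hbal : ∀ a : X, ∑ y, φ a y = ∑ y, φ y a)
    (p : Fin (M + 1) → X)
    (hstart : p 0 = x₀) (hend : p (Fin.last M) = x₀)
    (htour : ∀ a b, flux p a b = φ a b) (hM : M = ∑ a, ∑ b, φ a b) :
    ∃ f : X → X, f x₀ = x₀ ∧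
      (∀ x, x ≠ x₀ → ∃ i : Fin M, p i.castSucc = x ∧ p i.succ = f x ∧
        ∀ j : Fin M, p j.castSucc = x → j ≤ i) ∧
      ∀ x : X, ∃ n : ℕ, f^[n] x = x₀ :=
  lastExit_spanning_tree_general φ x₀ hconn p hend htour
end

section
/- If Δ is a square matrix with det Δ = 0 whose columns sum to zero, and Δ' is obtained from Δ by adding 1 to the diagonal entry at a fixed index v (Δ'_{xy} = Δ_{xy} + δ_{x,v}δ_{y,v}), then det Δ' equals the (v,v)-minor of Δ, i.e. the determinant of the matrix obtained from Δ by deleting row and column v. -/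
/-- if `Δ` has zero column sums (so `det Δ = 0`) and `Δ'` is obtained
from `Δ` by adding `1` at the diagonal entry `(v,v)`, then `det Δ'` equals the
`(v,v)`-minor of `Δ` (the determinant of `Δ` with row and column `v` deleted). -/
theorem det_add_one_diag_eq_minor {X : Type*} [Fintype X] [DecidableEq X]
    (Δ : Matrix X X ℝ) (v : X)
    (hsum : ∀ y : X, ∑ x, Δ x y = 0) (hdet : Δ.det = 0) :
    (Matrix.of fun a b : X => Δ a b + if a = v ∧ b = v then 1 else 0).det =
      (Δ.submatrix (fun x : {x : X // x ≠ v} => (x : X))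
        (fun x : {x : X // x ≠ v} => (x : X))).det := by
  have h1 : (Matrix.of fun a b : X => Δ a b + if a = v ∧ b = v then 1 else 0) =
      Δ.updateCol v ((fun x => Δ x v) + Pi.single v 1) := by
    ext a b
    simp only [Matrix.of_apply, Matrix.updateCol_apply, Pi.add_apply, Pi.single_apply]
    by_cases hb : b = v <;> by_cases ha : a = v <;> simp [hb, ha]
  rw [h1, Matrix.det_updateCol_add, Matrix.updateCol_eq_self, hdet, zero_add]
  -- now reduce det (updateColumn Δ v (Pi.single v 1)) to the minor
  haveI : Unique {x : X // ¬ x ≠ v} := ⟨⟨⟨v, not_not_intro rfl⟩⟩, fun x => Subtype.ext (not_not.mp x.2)⟩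
  set M := Δ.updateCol v (Pi.single v 1) with hM
  rw [← Matrix.det_submatrix_equiv_self (Equiv.sumCompl (fun x : X => x ≠ v)) M]
  have hblock : M.submatrix (Equiv.sumCompl (fun x : X => x ≠ v)) (Equiv.sumCompl (fun x : X => x ≠ v)) =
      Matrix.fromBlocks
        (Δ.submatrix (fun x : {x : X // x ≠ v} => (x : X)) (fun x : {x : X // x ≠ v} => (x : X)))
        0
        (Matrix.of fun (_ : {x : X // ¬ x ≠ v}) (y : {x : X // x ≠ v}) => Δ v (y : X))
        1 := by
    ext i j
    cases i with
    | inl i =>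
      cases j with
      | inl j =>
        simp [M, Matrix.updateCol_apply, j.2]
      | inr j =>
        have hj : (j : X) = v := not_not.mp j.2
        simp [M, Matrix.updateCol_apply, hj, Pi.single_apply, i.2]
    | inr i =>
      have hi : (i : X) = v := not_not.mp i.2
      cases j with
      | inl j =>
        simp [M, Matrix.updateCol_apply, j.2, hi]
      | inr j =>
        have hj : (j : X) = v := not_not.mp j.2
        simp [M, Matrix.updateCol_apply, hj, hi, Pi.single_apply, Matrix.one_apply,
          Subsingleton.elim i j]
  rw [hblock, Matrix.det_fromBlocks_zero₁₂, Matrix.det_one, mul_one]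
end
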